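/- The second-order compensator tends to +∞ as (ξ, α, β) → (0, 0, 0) with ξ > 0; formally, Filter.Tendsto (fun p : ℝ × ℝ × ℝ => Ω p.1 p.2.1 p.2.2) ((nhdsWithin 0 (Set.Ioi 0)) ×ˢ (nhds 0) ×ˢ (nhds 0)) Filter.atTop. -/

import Mathlib

noncomputable def omega (ξ α : ℝ) : ℝ :=
  if α = 0 then -Real.log ξ else (ξ ^ (-α) - 1) / α

noncomputable def Omega2 (ξ α β : ℝ) : ℝ :=
  if α = β then (1/2) * (Real.log ξ) ^ 2 else (omega ξ α - omega ξ β) / (α - β)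

lemma integral_exp_mul'' (α t : ℝ) (h : α ≠ 0) :
    ∫ s in (0:ℝ)..t, Real.exp (α * s) = (Real.exp (α * t) - 1) / α := by
  have hd : ∀ s ∈ Set.uIcc (0:ℝ) t,
      HasDerivAt (fun s => Real.exp (α * s) / α) (Real.exp (α * s)) s := by
    intro s _
    have h1 : HasDerivAt (fun s : ℝ => α * s) α s := by
      simpa using (hasDerivAt_id s).const_mul α
    have h3 := ((Real.hasDerivAt_exp (α * s)).comp s h1).div_const α
    simpa [mul_div_assoc, mul_div_cancel_right₀, h] using h3
  rw [intervalIntegral.integral_eq_sub_of_hasDerivAt hd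
    ((Real.continuous_exp.comp (continuous_const.mul continuous_id)).intervalIntegrable 0 t)]
  simp
  ring

lemma omega_eq_integral (ξ α : ℝ) (hξ : 0 < ξ) :
    omega ξ α = ∫ s in (0:ℝ)..(-Real.log ξ), Real.exp (α * s) := by
  rcases eq_or_ne α 0 with h | h
  · simp [omega, h]
  · rw [omega, if_neg h, integral_exp_mul'' α _ h]
    rw [Real.rpow_def_of_pos hξ]
    ring_nf

lemma Omega2_symm (ξ α β : ℝ) : Omega2 ξ α β = Omega2 ξ β α := by
  unfold Omega2
  rcases eq_or_ne α β with h | h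
  · simp [h]
  · rw [if_neg h, if_neg (Ne.symm h), ← neg_div_neg_eq]
    ring_nf

lemma third_le_exp {x : ℝ} (hx : -1 ≤ x) : (1:ℝ) / 3 ≤ Real.exp x := by
  have h3 : Real.exp 1 ≤ 3 := by
    have := Real.exp_one_lt_d9
    linarith
  calc (1:ℝ) / 3 ≤ Real.exp (-1) := by
        rw [Real.exp_neg, div_le_iff₀ (by norm_num), inv_mul_eq_div,
          le_div_iff₀ (Real.exp_pos 1)]
        linarith
    _ ≤ Real.exp x := Real.exp_le_exp.mpr hx

lemma Omega2_key (ξ α β T : ℝ) (hξ : 0 < ξ) (hβα : β < α) (hT : 0 < T)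
    (ht : T < -Real.log ξ) (hα : |α| ≤ 1 / T) (hβ : |β| ≤ 1 / T) :
    T ^ 2 / 6 ≤ Omega2 ξ α β := by
  set t : ℝ := -Real.log ξ with htdef
  have hαβ : α ≠ β := hβα.ne'
  have hTt : T ≤ t := ht.le
  have hsub : (0:ℝ) < α - β := sub_pos.mpr hβα
  have hint : ∀ γ a b : ℝ,
      IntervalIntegrable (fun s => Real.exp (γ * s)) MeasureTheory.volume a b :=
    fun γ a b =>
      (Real.continuous_exp.comp (continuous_const.mul continuous_id)).intervalIntegrable a b
  -- pointwise lower bound on [0, T]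
  have hpt : ∀ s ∈ Set.Icc (0:ℝ) T,
      (α - β) * (s / 3) ≤ Real.exp (α * s) - Real.exp (β * s) := by
    intro s hs
    obtain ⟨hs0, hsT⟩ := hs
    have h1 : Real.exp (β * s) * (1 + (α - β) * s) ≤ Real.exp (α * s) := by
      have := Real.add_one_le_exp ((α - β) * s)
      calc Real.exp (β * s) * (1 + (α - β) * s)
          ≤ Real.exp (β * s) * Real.exp ((α - β) * s) := by
            apply mul_le_mul_of_nonneg_left (by linarith) (Real.exp_nonneg _)
        _ = Real.exp (α * s) := by rw [← Real.exp_add]; ring_nf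
    have h2 : (1:ℝ) / 3 ≤ Real.exp (β * s) := by
      apply third_le_exp
      have : |β * s| ≤ 1 := by
        rw [abs_mul]
        calc |β| * |s| ≤ (1 / T) * T := by
              apply mul_le_mul hβ (by rwa [abs_of_nonneg hs0]) (abs_nonneg _)
              positivity
          _ = 1 := by field_simp
      linarith [neg_abs_le (β * s)]
    nlinarith [mul_le_mul_of_nonneg_left h2 (mul_nonneg hsub.le hs0),
      Real.exp_nonneg (β * s)]
  -- integral representation
  have hrep : Omega2 ξ α β =
      (∫ s in (0:ℝ)..t, (Real.exp (α * s) - Real.exp (β * s))) / (α - β) := by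
    rw [Omega2, if_neg hαβ, omega_eq_integral ξ α hξ, omega_eq_integral ξ β hξ,
      intervalIntegral.integral_sub (hint α 0 t) (hint β 0 t)]
  rw [hrep, le_div_iff₀ hsub]
  have hsplit : ∫ s in (0:ℝ)..t, (Real.exp (α * s) - Real.exp (β * s)) =
      (∫ s in (0:ℝ)..T, (Real.exp (α * s) - Real.exp (β * s))) +
      ∫ s in T..t, (Real.exp (α * s) - Real.exp (β * s)) := by
    rw [intervalIntegral.integral_add_adjacent_intervals
      ((hint α 0 T).sub (hint β 0 T)) ((hint α T t).sub (hint β T t))]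
  have htail : 0 ≤ ∫ s in T..t, (Real.exp (α * s) - Real.exp (β * s)) := by
    apply intervalIntegral.integral_nonneg hTt
    intro u hu
    have hu0 : 0 ≤ u := le_trans hT.le hu.1
    have : β * u ≤ α * u := mul_le_mul_of_nonneg_right hβα.le hu0
    simp only [sub_nonneg]
    exact Real.exp_le_exp.mpr this
  have hmain : (α - β) * T ^ 2 / 6 ≤
      ∫ s in (0:ℝ)..T, (Real.exp (α * s) - Real.exp (β * s)) := by
    have hmono := intervalIntegral.integral_mono_on hT.le
      ((continuous_const.mul (continuous_id.div_const 3)).intervalIntegrable 0 T :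
        IntervalIntegrable (fun s => (α - β) * (s / 3)) MeasureTheory.volume 0 T)
      ((hint α 0 T).sub (hint β 0 T)) hpt
    have hcomp : ∫ s in (0:ℝ)..T, (α - β) * (s / 3) = (α - β) * T ^ 2 / 6 := by
      simp [intervalIntegral.integral_const_mul, intervalIntegral.integral_div,
        integral_id]
      ring
    simp only [id_eq, Pi.mul_apply] at hmono
    linarith
  have hr : T ^ 2 / 6 * (α - β) = (α - β) * T ^ 2 / 6 := by ring
  linarith [hsplit, htail, hmain]

theorem Omega2_tendsto_atTop :
    Filter.Tendsto (fun p : ℝ × ℝ × ℝ => Omega2 p.1 p.2.1 p.2.2)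
      ((nhdsWithin (0:ℝ) (Set.Ioi 0)) ×ˢ ((nhds (0:ℝ)) ×ˢ (nhds (0:ℝ))))
      Filter.atTop := by
  rw [Filter.tendsto_atTop]
  intro b
  set T : ℝ := max 1 (Real.sqrt (6 * b)) with hTdef
  have hT1 : (1:ℝ) ≤ T := le_max_left _ _
  have hT0 : (0:ℝ) < T := lt_of_lt_of_le one_pos hT1
  have hbT : b ≤ T ^ 2 / 6 := by
    rcases le_or_gt b 0 with h | h
    · nlinarith
    · have hs : Real.sqrt (6 * b) ≤ T := le_max_right _ _
      have h6 : (0:ℝ) ≤ 6 * b := by linarith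
      nlinarith [Real.sq_sqrt h6, Real.sqrt_nonneg (6 * b)]
  have h1 : ∀ᶠ ξ in nhdsWithin (0:ℝ) (Set.Ioi 0), 0 < ξ ∧ ξ < Real.exp (-T) := by
    apply Filter.Eventually.and
    · exact Filter.eventually_of_mem self_mem_nhdsWithin (fun x hx => hx)
    · exact Filter.eventually_of_mem
        (nhdsWithin_le_nhds (Iio_mem_nhds (Real.exp_pos (-T)))) (fun x hx => hx)
  have h2 : ∀ᶠ α in nhds (0:ℝ), |α| ≤ 1 / T := by
    filter_upwards [Metric.ball_mem_nhds (0:ℝ) (by positivity : (0:ℝ) < 1 / T)] with x hx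
    simp only [Metric.mem_ball, Real.dist_eq, sub_zero] at hx
    exact hx.le
  filter_upwards [Filter.Eventually.prod_mk h1 (h2.prod_mk h2)] with p hp
  obtain ⟨⟨hξ0, hξe⟩, hα, hβ⟩ := hp
  have hlog : Real.log p.1 < -T := by
    rw [← Real.log_exp (-T)]
    exact Real.log_lt_log hξ0 hξe
  have ht : T < -Real.log p.1 := by linarith
  have key : T ^ 2 / 6 ≤ Omega2 p.1 p.2.1 p.2.2 := by
    rcases lt_trichotomy p.2.1 p.2.2 with h | h | h
    · rw [Omega2_symm]
      exact Omega2_key p.1 p.2.2 p.2.1 T hξ0 h hT0 ht hβ hα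
    · rw [Omega2, if_pos h]
      nlinarith [sq_nonneg (Real.log p.1 + T)]
    · exact Omega2_key p.1 p.2.1 p.2.2 T hξ0 h hT0 ht hα hβ
  linarith
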